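/- arXiv:0908.3879 — 2 statements merged into one kernel-verified Lean document; each statement's English description precedes it below -/
import Mathlib

section
/- Let x ∈ gl(i, ℂ) be a regular element, i.e., its centralizer z(x) = {y ∈ gl(i,ℂ) : [x,y] = 0} has dimension i. Then the centralizer of x equals the linear span of the powers x^0 = I, x, x^2, ..., x^{i-1}. -/
noncomputable section

open Matrix

/-- The centralizer of `x` in `gl(i,ℂ)`, as a subspace. -/
def matCentralizer (i : ℕ) (x : Matrix (Fin i) (Fin i) ℂ) :
    Submodule ℂ (Matrix (Fin i) (Fin i) ℂ) :=
  LinearMap.ker (LinearMap.mulLeft ℂ x - LinearMap.mulRight ℂ x)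

/-!
Regard `ℂⁱ` as a `ℂ[X]`-module `M` through `x`; the centralizer of `x` is then `End_{ℂ[X]} M`.
By the structure theorem `M ≅ ⨁ ℂ[X]/(q_k)` with `∑ deg q_k = i`, so
`dim End M = ∑_{k,l} dim Hom(ℂ[X]/(q_k), ℂ[X]/(q_l))`, and the diagonal terms alone contribute
`∑ dim End(ℂ[X]/(q_k)) ≥ ∑ deg q_k = i`. Regularity therefore kills every `Hom` between distinct
summands, which forces the `q_k` to be pairwise coprime. The minimal polynomial of `x` is divisible
by every `q_k`, hence by their product, so it has degree at least `i`: the powers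
`I, x, …, x^{i-1}` are linearly independent, and they span an `i`-dimensional subspace of the
centralizer.
-/

open Polynomial Module DirectSum Function

section

variable {K : Type*} [Field K]

instance Module.Finite.linearMap_of_isScalarTower {R M N : Type*} [Semiring R] [Algebra K R]
    [AddCommGroup M] [Module R M] [Module K M] [IsScalarTower K R M] [Module.Finite K M]
    [AddCommGroup N] [Module R N] [Module K N] [IsScalarTower K R N] [Module.Finite K N] :
    Module.Finite K (M →ₗ[R] N) :=
  Module.Finite.of_injective (LinearMap.restrictScalarsₗ K R M N K)
    (LinearMap.restrictScalars_injective K)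

theorem finrank_end_directSum {R ι : Type*} [CommRing R] [Algebra K R] [Fintype ι] [DecidableEq ι]
    (M : ι → Type*) [∀ k, AddCommGroup (M k)] [∀ k, Module R (M k)] [∀ k, Module K (M k)]
    [∀ k, IsScalarTower K R (M k)] [∀ k, Module.Finite K (M k)] :
    finrank K (Module.End R (⨁ k, M k)) = ∑ k, ∑ l, finrank K (M k →ₗ[R] M l) := by
  let e : Module.End R (⨁ k, M k) ≃ₗ[K] ∀ k l, M k →ₗ[R] M l :=
    (DFinsupp.lsum K).symm ≪≫ₗ LinearEquiv.piCongrRight fun k =>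
      (DirectSum.linearEquivFunOnFintype R ι M).congrRight.restrictScalars K ≪≫ₗ
        (LinearEquiv.linearMapPi K).symm
  rw [e.finrank_eq, Module.finrank_pi_fintype]
  exact Finset.sum_congr rfl fun k _ => Module.finrank_pi_fintype K

theorem finrank_quotient_le_finrank_end {R : Type*} [CommRing R] [Algebra K R] (I : Ideal R)
    [Module.Finite K (R ⧸ I)] :
    finrank K (R ⧸ I) ≤ finrank K (Module.End R (R ⧸ I)) := by
  let eval : Module.End R (R ⧸ I) →ₗ[K] R ⧸ I :=
    { toFun := fun f => f (Submodule.Quotient.mk 1)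
      map_add' := fun _ _ => rfl
      map_smul' := fun _ _ => rfl }
  have heval : Function.Surjective eval := by
    rintro ⟨r⟩
    refine ⟨r • LinearMap.id, ?_⟩
    show r • Submodule.Quotient.mk (p := I) 1 = _
    rw [← Submodule.Quotient.mk_smul, smul_eq_mul, mul_one]
    rfl
  have := LinearMap.finrank_range_le eval
  rwa [LinearMap.range_eq_top.mpr heval, finrank_top] at this

theorem isCoprime_of_subsingleton_linearMap_quotient {R : Type*} [CommRing R] [IsDomain R]
    [IsPrincipalIdealRing R] {s t : R} (ht : t ≠ 0)
    (h : Subsingleton ((R ⧸ R ∙ s) →ₗ[R] (R ⧸ R ∙ t))) : IsCoprime s t := by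
  refine isCoprime_of_dvd s t (fun h0 => ht h0.2) ?_
  rintro z hz - ⟨a, rfl⟩ ⟨u, rfl⟩
  refine hz ?_
  -- a common divisor `z` of `s = z a` and `t = z u` gives the map `R/(s) → R/(t)`, `1 ↦ u`
  have hle : R ∙ (z * a) ≤ (R ∙ (z * u)).comap (LinearMap.mulRight R u) := by
    rw [Submodule.span_singleton_le_iff_mem, Submodule.mem_comap, LinearMap.mulRight_apply]
    exact Submodule.mem_span_singleton.mpr ⟨a, by rw [smul_eq_mul]; ring⟩
  have hu : Submodule.Quotient.mk (p := R ∙ (z * u)) u = 0 := by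
    have := LinearMap.congr_fun (Subsingleton.elim (Submodule.mapQ _ _ _ hle) 0)
      (Submodule.Quotient.mk 1)
    rwa [Submodule.mapQ_apply, LinearMap.mulRight_apply, one_mul, LinearMap.zero_apply] at this
  obtain ⟨c, hc⟩ := Submodule.mem_span_singleton.mp ((Submodule.Quotient.mk_eq_zero _).mp hu)
  have hu0 : u ≠ 0 := right_ne_zero_of_mul ht
  refine IsUnit.of_mul_eq_one c (mul_left_cancel₀ hu0 ?_)
  rw [smul_eq_mul] at hc
  linear_combination hc

theorem finite_quotient_span_singleton {q : K[X]} (hq : q ≠ 0) :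
    Module.Finite K (K[X] ⧸ K[X] ∙ q) :=
  (AdjoinRoot.powerBasis hq).finite

theorem dvd_of_mem_annihilator_directSum_quotient {R ι : Type*} [CommRing R]
    {q : ι → R} {r : R} (hr : r ∈ Module.annihilator R (⨁ k, R ⧸ R ∙ q k)) (k : ι) : q k ∣ r := by
  simp_rw [DirectSum, Module.annihilator_dfinsupp, Submodule.mem_iInf,
    Ideal.annihilator_quotient] at hr
  exact Ideal.mem_span_singleton.mp (hr k)

theorem pairwise_isCoprime_of_finrank_end_directSum_le {ι : Type*} [Fintype ι] [DecidableEq ι]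
    {q : ι → K[X]} (hq : ∀ k, q k ≠ 0)
    (h : finrank K (Module.End K[X] (⨁ k, K[X] ⧸ K[X] ∙ q k)) ≤ ∑ k, (q k).natDegree) :
    Pairwise (IsCoprime on q) := by
  have := fun k => finite_quotient_span_singleton (hq k)
  set d : ι → ι → ℕ := fun k l => finrank K ((K[X] ⧸ K[X] ∙ q k) →ₗ[K[X]] (K[X] ⧸ K[X] ∙ q l))
  have hdiag : ∑ k, (q k).natDegree ≤ ∑ k, d k k := Finset.sum_le_sum fun k _ =>
    finrank_quotient_span_eq_natDegree (f := q k) ▸ finrank_quotient_le_finrank_end _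
  rw [finrank_end_directSum] at h
  intro k l hkl
  refine isCoprime_of_subsingleton_linearMap_quotient (hq l)
    ((Module.finrank_zero_iff (R := K)).mp ?_)
  have hoff : d k l ≤ ∑ k, ∑ l ∈ Finset.univ.erase k, d k l :=
    (Finset.single_le_sum (f := fun l => d k l) (fun _ _ => Nat.zero_le _)
      (Finset.mem_erase.mpr ⟨hkl.symm, Finset.mem_univ l⟩)).trans
      (Finset.single_le_sum (f := fun k => ∑ l ∈ Finset.univ.erase k, d k l)
        (fun _ _ => Nat.zero_le _) (Finset.mem_univ k))
  have hsplit : ∑ k, ∑ l, d k l = ∑ k, d k k + ∑ k, ∑ l ∈ Finset.univ.erase k, d k l := by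
    rw [← Finset.sum_add_distrib]
    exact Finset.sum_congr rfl fun k _ => (Finset.add_sum_erase _ _ (Finset.mem_univ k)).symm
  change ∑ k, ∑ l, d k l ≤ _ at h
  show d k l = 0
  omega

theorem finrank_le_natDegree_of_finrank_end_le {M : Type*} [AddCommGroup M] [Module K[X] M]
    [Module K M] [IsScalarTower K K[X] M] [Module.Finite K M]
    (hEnd : finrank K (Module.End K[X] M) ≤ finrank K M) {r : K[X]} (hr : r ≠ 0)
    (hrM : r ∈ Module.annihilator K[X] M) : finrank K M ≤ r.natDegree := by
  classical
  have htors : Module.IsTorsion K[X] M := fun m =>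
    ⟨⟨r, mem_nonZeroDivisors_of_ne_zero hr⟩, Module.mem_annihilator.mp hrM m⟩
  have : Module.Finite K[X] M := Module.Finite.of_restrictScalars_finite K K[X] M
  obtain ⟨ι, _, p, hp, n, ⟨e⟩⟩ := Module.equiv_directSum_of_isTorsion htors
  set q : ι → K[X] := fun k => p k ^ n k
  have hq : ∀ k, q k ≠ 0 := fun k => pow_ne_zero _ (hp k).ne_zero
  have := fun k => finite_quotient_span_singleton (hq k)
  have hdim : finrank K M = ∑ k, (q k).natDegree := by
    rw [(e.restrictScalars K).finrank_eq, finrank_directSum]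
    exact Finset.sum_congr rfl fun k _ => finrank_quotient_span_eq_natDegree
  have hcop : Pairwise (IsCoprime on q) := by
    refine pairwise_isCoprime_of_finrank_end_directSum_le hq ?_
    rw [← hdim, ← (e.conj.restrictScalars K).finrank_eq]
    exact hEnd
  have hdvd : ∏ k, q k ∣ r := Fintype.prod_dvd_of_coprime hcop
    (dvd_of_mem_annihilator_directSum_quotient (e.annihilator_eq ▸ hrM))
  calc finrank K M = ∑ k, (q k).natDegree := hdim
    _ = (∏ k, q k).natDegree := (natDegree_prod _ _ fun k _ => hq k).symm
    _ ≤ r.natDegree := natDegree_le_of_dvd hdvd hr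

variable {V : Type*} [AddCommGroup V] [Module K V]

theorem finrank_le_natDegree_minpoly_of_finrank_end_le [FiniteDimensional K V]
    (f : Module.End K V) (h : finrank K (Module.End K[X] (AEval' f)) ≤ finrank K V) :
    finrank K V ≤ (minpoly K f).natDegree := by
  rw [(AEval'.of f).finrank_eq] at h ⊢
  refine finrank_le_natDegree_of_finrank_end_le h (minpoly.ne_zero_of_finite K f) ?_
  rw [← span_minpoly_eq_annihilator]
  exact Ideal.mem_span_singleton_self _

theorem commute_conj_restrictScalars (f : Module.End K V) (T : Module.End K[X] (AEval' f)) :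
    Commute f ((AEval'.of f).symm.conj (T.restrictScalars K)) := by
  ext v
  simp only [Module.End.mul_apply, LinearEquiv.conj_apply, LinearMap.comp_apply,
    LinearEquiv.coe_coe, LinearEquiv.symm_symm, LinearMap.restrictScalars_apply]
  rw [← AEval'.of_symm_X_smul, ← map_smul, AEval'.X_smul_of]

end

theorem mem_matCentralizer_iff {i : ℕ} {x y : Matrix (Fin i) (Fin i) ℂ} :
    y ∈ matCentralizer i x ↔ Commute x y := by
  rw [matCentralizer, LinearMap.mem_ker, LinearMap.sub_apply, sub_eq_zero]
  rfl

theorem finrank_end_aeval_toLin'_le {i : ℕ} (x : Matrix (Fin i) (Fin i) ℂ) :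
    finrank ℂ (Module.End ℂ[X] (AEval' (toLin' x))) ≤ finrank ℂ (matCentralizer i x) := by
  let φ : Module.End ℂ[X] (AEval' (toLin' x)) →ₗ[ℂ] Matrix (Fin i) (Fin i) ℂ :=
    LinearMap.toMatrix'.toLinearMap ∘ₗ (AEval'.of (toLin' x)).symm.conj.toLinearMap ∘ₗ
      LinearMap.restrictScalarsₗ ℂ ℂ[X] _ _ ℂ
  have hφ : Function.Injective φ :=
    LinearMap.toMatrix'.injective.comp <|
      (AEval'.of (toLin' x)).symm.conj.injective.comp (LinearMap.restrictScalars_injective ℂ)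
  have hmem : ∀ T, φ T ∈ matCentralizer i x := fun T => by
    have hT : toLin' (φ T) = (AEval'.of (toLin' x)).symm.conj (T.restrictScalars ℂ) :=
      toLin'_toMatrix' _
    rw [mem_matCentralizer_iff, Commute, SemiconjBy, ← toLin'.injective.eq_iff, toLin'_mul,
      toLin'_mul, hT]
    exact commute_conj_restrictScalars (toLin' x) T
  exact LinearMap.finrank_le_finrank_of_injective (f := φ.codRestrict _ hmem)
    fun _ _ h => hφ (congrArg Subtype.val h)

/-- If `x ∈ gl(i,ℂ)` is regular (its centralizer has dimension `i`), then its
centralizer is the span of `I, x, x², …, x^{i-1}`. -/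
theorem stmt3 (i : ℕ) (x : Matrix (Fin i) (Fin i) ℂ)
    (hreg : Module.finrank ℂ (matCentralizer i x) = i) :
    Submodule.span ℂ (Set.range fun j : Fin i => x ^ (j : ℕ)) = matCentralizer i x := by
  have hdeg : i ≤ (minpoly ℂ x).natDegree := by
    have h := finrank_le_natDegree_minpoly_of_finrank_end_le (toLin' x)
      ((finrank_end_aeval_toLin'_le x).trans (hreg.trans (finrank_fin_fun ℂ).symm).le)
    rwa [finrank_fin_fun, minpoly_toLin'] at h
  have hli : LinearIndependent ℂ fun j : Fin i => x ^ (j : ℕ) :=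
    (linearIndependent_pow x).comp (Fin.castLE hdeg) (Fin.castLE_injective hdeg)
  have hle : Submodule.span ℂ (Set.range fun j : Fin i => x ^ (j : ℕ)) ≤ matCentralizer i x :=
    Submodule.span_le.mpr <| Set.range_subset_iff.mpr fun j =>
      mem_matCentralizer_iff.mpr (Commute.self_pow x j)
  refine Submodule.eq_of_le_of_finrank_le hle ?_
  rw [hreg, finrank_span_eq_card hli, Fintype.card_fin]
end
end

section
/- Let k be a complex reductive Lie algebra, p = l ⊕ u a parabolic subalgebra with Levi factor l and nilradical u, U the unipotent group with Lie algebra u, z the center of l, z_gen = {z ∈ z : z_k(z) = l}, z ∈ z_gen, and y ∈ l nilpotent. Then the U-orbit of z + y under the adjoint action equals the affine subspace z + y + u: U · (z + y) = z + y + u. -/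
noncomputable section

open Matrix

attribute [local instance 100] LieRing.ofAssociativeRing

/-- The exponential of a nilpotent `m × m` matrix, given by the (finite)
exponential series. -/
def nilExp (m : ℕ) (v : Matrix (Fin m) (Fin m) ℂ) : Matrix (Fin m) (Fin m) ℂ :=
  ∑ k ∈ Finset.range (m + 1), ((k.factorial : ℂ)⁻¹) • v ^ k

/-!
Conjugation by `exp v` is `exp (ad v)`, so for `x = z + y`, which normalizes `u`, it sends `x`
into `x + u`. The map `ad x` is injective on `u`: `ad z` is, its kernel being `l ∩ u = 0`, and
`ad y` is a commuting nilpotent. Filter `u` by its upper central series `u.ucs k`, which is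
`ad x`-stable and exhausts `u` since `u` is nilpotent (Engel); `ad x` is then bijective on each
`u.ucs k`. If the error `exp v * x * exp (-v) - (x + w)` equals `⁅x, δ⁆` with
`δ ∈ u.ucs (k + 1)`, replacing `v` by `v + δ` moves the error into `u.ucs k`, because modulo
`u.ucs k` the conjugate only changes by `⁅δ, x⁆`. After finitely many steps the error vanishes.
-/

theorem Matrix.pow_card_eq_zero_of_isNilpotent {n R : Type*} [Fintype n] [DecidableEq n]
    [CommRing R] [IsDomain R] {v : Matrix n n R} (h : IsNilpotent v) :
    v ^ Fintype.card n = 0 := by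
  have hchar : v.charpoly = Polynomial.X ^ Fintype.card n := by
    simpa [sub_eq_zero] using (Matrix.isNilpotent_charpoly_sub_pow_of_isNilpotent h).eq_zero
  simpa [hchar] using v.aeval_self_charpoly

theorem nilExp_eq_exp {m : ℕ} {v : Matrix (Fin m) (Fin m) ℂ} (hv : IsNilpotent v) :
    nilExp m v = IsNilpotent.exp v := by
  have hv' : v ^ (m + 1) = 0 := by
    simpa [pow_succ] using congrArg (· * v) (Matrix.pow_card_eq_zero_of_isNilpotent hv)
  simp only [nilExp, IsNilpotent.exp_eq_sum hv', ← Rat.cast_smul_eq_qsmul ℂ, Rat.cast_inv,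
    Rat.cast_natCast]

theorem Submodule.rat_smul_mem {K M : Type*} [DivisionRing K] [AddCommGroup M] [Module K M]
    [Module ℚ M] (p : Submodule K M) (q : ℚ) {w : M} (hw : w ∈ p) : q • w ∈ p := by
  simpa [ratCast_smul_eq K ℚ] using p.smul_mem (q : K) hw

theorem Module.End.eq_zero_of_add_apply_eq_zero {R M : Type*} [CommRing R] [AddCommGroup M]
    [Module R M] {f g : Module.End R M} (hfg : Commute f g) (hg : IsNilpotent g)
    {p : Submodule R M} (hfp : ∀ w ∈ p, f w ∈ p) (hf : ∀ w ∈ p, f w = 0 → w = 0)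
    {w : M} (hw : w ∈ p) (h : (f + g) w = 0) : w = 0 := by
  have hfw : f w = (-g) w := by
    rw [LinearMap.add_apply, add_eq_zero_iff_eq_neg] at h
    rw [h, LinearMap.neg_apply]
  have hpow : ∀ k, (f ^ k) w = ((-g) ^ k) w := by
    intro k
    induction k with
    | zero => rfl
    | succ k ih =>
      rw [pow_succ, Module.End.mul_apply, hfw, ← Module.End.mul_apply,
        ((hfg.neg_right).pow_left k).eq, Module.End.mul_apply, ih, ← Module.End.mul_apply,
        ← pow_succ']
  have hinj : ∀ k, ∀ w ∈ p, (f ^ k) w = 0 → w = 0 := by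
    intro k
    induction k with
    | zero => exact fun w _ h => h
    | succ k ih =>
      intro w hw h
      rw [pow_succ, Module.End.mul_apply] at h
      exact hf w hw (ih (f w) (hfp w hw) h)
  obtain ⟨k, hk⟩ := hg.neg
  exact hinj k w hw (by rw [hpow, hk, LinearMap.zero_apply])

namespace IsNilpotent

variable {R A : Type*} [CommRing R] [Ring A] [Algebra R A] [Module ℚ A]

theorem exp_mulLeft {a : A} (ha : IsNilpotent a) :
    exp (LinearMap.mulLeft R a) = LinearMap.mulLeft R (exp a) :=
  (map_exp ha (Algebra.lmul R A)).symm

theorem exp_mulRight {a : A} (ha : IsNilpotent a) :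
    exp (LinearMap.mulRight R a) = LinearMap.mulRight R (exp a) := by
  obtain ⟨k, hk⟩ := ha
  have hk' : LinearMap.mulRight R a ^ k = 0 := by rw [LinearMap.pow_mulRight, hk]; simp
  simp only [exp_eq_sum hk, exp_eq_sum hk', LinearMap.pow_mulRight]
  have := map_sum (LinearMap.mul R A).flip (fun i => (i.factorial : ℚ)⁻¹ • a ^ i) (Finset.range k)
  simp only [map_rat_smul] at this
  exact this.symm

theorem exp_mul_mul_exp_neg {a : A} (ha : IsNilpotent a) (b : A) :
    exp a * b * exp (-a) = exp (LieAlgebra.ad R A a) b := by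
  have hL : IsNilpotent (LinearMap.mulLeft R a) := ha.map (Algebra.lmul R A)
  have hR : IsNilpotent (LinearMap.mulRight R (-a)) := by
    obtain ⟨k, hk⟩ := ha.neg
    exact ⟨k, by rw [LinearMap.pow_mulRight, hk]; simp⟩
  have had : LieAlgebra.ad R A a = LinearMap.mulLeft R a + LinearMap.mulRight R (-a) := by
    ext c; simp [LieRing.of_associative_ring_bracket, sub_eq_add_neg]
  rw [had, exp_add_of_commute (LinearMap.commute_mulLeft_right a (-a)) hL hR, exp_mulLeft ha,
    exp_mulRight ha.neg]
  simp [mul_assoc]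

theorem exp_mul_mul_exp_neg_eq_sum {a : A} (ha : IsNilpotent a) (b : A) {N : ℕ}
    (hN : LieAlgebra.ad R A a ^ N = 0) :
    exp a * b * exp (-a) =
      ∑ i ∈ Finset.range N, (i.factorial : ℚ)⁻¹ • (LieAlgebra.ad R A a ^ i) b := by
  rw [exp_mul_mul_exp_neg (R := R) ha, exp_eq_sum hN, LinearMap.sum_apply]
  rfl

end IsNilpotent

namespace LieSubalgebra

section CommRing

variable {R L : Type*} [CommRing R] [LieRing L] [LieAlgebra R L]

/-- The upper central series of the Lie algebra `u`, as a chain of submodules of `L`. -/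
def ucs (u : LieSubalgebra R L) : ℕ → Submodule R L
  | 0 => ⊥
  | k + 1 => u.toSubmodule ⊓ ⨅ v ∈ u, (u.ucs k).comap (LieAlgebra.ad R L v)

variable {u : LieSubalgebra R L} {k : ℕ} {v w x δ : L}

theorem mem_ucs_succ : w ∈ u.ucs (k + 1) ↔ w ∈ u ∧ ∀ v ∈ u, ⁅v, w⁆ ∈ u.ucs k := by
  simp [ucs]

theorem mem_of_mem_ucs (hw : w ∈ u.ucs k) : w ∈ u := by
  cases k with
  | zero => simp [ucs] at hw; simp [hw]
  | succ k => exact (mem_ucs_succ.1 hw).1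

theorem ucs_mono : Monotone u.ucs := by
  refine monotone_nat_of_le_succ fun k => ?_
  induction k with
  | zero => exact bot_le
  | succ k ih =>
    intro w hw
    rw [mem_ucs_succ] at hw ⊢
    exact ⟨hw.1, fun v hv => ih (hw.2 v hv)⟩

theorem lie_mem_ucs (hv : v ∈ u) (hw : w ∈ u.ucs (k + 1)) : ⁅v, w⁆ ∈ u.ucs k :=
  (mem_ucs_succ.1 hw).2 v hv

theorem lie_mem_ucs_of_mem_normalizer (hx : x ∈ u.normalizer) (hw : w ∈ u.ucs k) :
    ⁅x, w⁆ ∈ u.ucs k := by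
  induction k generalizing w with
  | zero => simp_all [ucs]
  | succ k ih =>
    rw [mem_ucs_succ] at hw ⊢
    refine ⟨(u.mem_normalizer_iff x).1 hx w hw.1, fun v hv => ?_⟩
    have hvx : ⁅v, x⁆ ∈ u := by
      rw [← lie_skew]; exact u.neg_mem ((u.mem_normalizer_iff x).1 hx v hv)
    rw [leibniz_lie]
    exact add_mem (hw.2 _ hvx) (ih (hw.2 v hv))

theorem coe_mem_ucs_iff (w : u) (k : ℕ) :
    (w : L) ∈ u.ucs k ↔ w ∈ (⊥ : LieSubmodule R u u).ucs k := by
  induction k generalizing w with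
  | zero => simp [ucs]
  | succ k ih =>
    simp only [mem_ucs_succ, LieSubmodule.ucs_succ, LieSubmodule.mem_normalizer, ← ih,
      LieSubalgebra.coe_bracket, SetLike.coe_mem, true_and, Subtype.forall]

theorem exists_ucs_eq_toSubmodule [LieRing.IsNilpotent u] : ∃ k, u.ucs k = u.toSubmodule := by
  obtain ⟨k, hk⟩ := (LieModule.isNilpotent_iff_exists_ucs_eq_top R (L := u) (M := u)).1 ‹_›
  refine ⟨k, le_antisymm (fun w hw => mem_of_mem_ucs hw) fun w hw => ?_⟩
  simpa [hk] using (coe_mem_ucs_iff ⟨w, hw⟩ k).2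

theorem ad_pow_apply_mem (hv : v ∈ u) (hx : x ∈ u) (i : ℕ) :
    (LieAlgebra.ad R L v ^ i) x ∈ u := by
  induction i with
  | zero => exact hx
  | succ i ih => rw [pow_succ', Module.End.mul_apply]; exact u.lie_mem hv ih

theorem ad_pow_succ_apply_mem (hv : v ∈ u) (hx : x ∈ u.normalizer) (i : ℕ) :
    (LieAlgebra.ad R L v ^ (i + 1)) x ∈ u := by
  rw [pow_succ, Module.End.mul_apply, LieAlgebra.ad_apply, ← lie_skew]
  exact ad_pow_apply_mem hv (u.neg_mem ((u.mem_normalizer_iff x).1 hx v hv)) i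

theorem ad_add_pow_succ_sub_apply (v δ x : L) (i : ℕ) :
    (LieAlgebra.ad R L (v + δ) ^ (i + 1) - LieAlgebra.ad R L v ^ (i + 1)) x =
      ⁅v + δ, (LieAlgebra.ad R L (v + δ) ^ i - LieAlgebra.ad R L v ^ i) x⁆ +
        ⁅δ, (LieAlgebra.ad R L v ^ i) x⁆ := by
  simp only [pow_succ', LinearMap.sub_apply, Module.End.mul_apply, LieAlgebra.ad_apply, lie_sub,
    add_lie]
  abel

theorem ad_add_pow_sub_apply_mem_ucs_succ (hv : v ∈ u) (hδ : δ ∈ u.ucs (k + 1))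
    (hx : x ∈ u.normalizer) (i : ℕ) :
    (LieAlgebra.ad R L (v + δ) ^ i - LieAlgebra.ad R L v ^ i) x ∈ u.ucs (k + 1) := by
  have hvδ : v + δ ∈ u := u.add_mem hv (mem_of_mem_ucs hδ)
  induction i with
  | zero => simp
  | succ i ih =>
    rw [ad_add_pow_succ_sub_apply, ← lie_skew δ]
    have hvx := ad_pow_apply_mem (u.le_normalizer hv) hx i
    exact add_mem (ucs_mono k.le_succ (lie_mem_ucs hvδ ih))
      (neg_mem (lie_mem_ucs_of_mem_normalizer hvx hδ))

theorem ad_add_pow_sub_apply_mem_ucs (hv : v ∈ u) (hδ : δ ∈ u.ucs (k + 1))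
    (hx : x ∈ u.normalizer) (i : ℕ) :
    (LieAlgebra.ad R L (v + δ) ^ (i + 2) - LieAlgebra.ad R L v ^ (i + 2)) x ∈ u.ucs k := by
  have hvδ : v + δ ∈ u := u.add_mem hv (mem_of_mem_ucs hδ)
  rw [ad_add_pow_succ_sub_apply, ← lie_skew δ]
  exact add_mem (lie_mem_ucs hvδ (ad_add_pow_sub_apply_mem_ucs_succ hv hδ hx (i + 1)))
    (neg_mem (lie_mem_ucs (ad_pow_succ_apply_mem hv hx i) hδ))

end CommRing

section Field

variable {K L : Type*} [Field K] [LieRing L] [LieAlgebra K L] [FiniteDimensional K L]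
  {u : LieSubalgebra K L}

theorem exists_lie_eq_of_injOn {x e : L} {k : ℕ} (hx : x ∈ u.normalizer)
    (hinj : ∀ w ∈ u, ⁅x, w⁆ = 0 → w = 0) (he : e ∈ u.ucs k) : ∃ δ ∈ u.ucs k, ⁅x, δ⁆ = e := by
  have hmaps : ∀ w ∈ u.ucs k, LieAlgebra.ad K L x w ∈ u.ucs k :=
    fun w hw => lie_mem_ucs_of_mem_normalizer hx hw
  have hinjOn : Set.InjOn (LieAlgebra.ad K L x) (u.ucs k) := by
    intro a ha b hb hab
    rw [← sub_eq_zero]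
    refine hinj _ (u.sub_mem (mem_of_mem_ucs ha) (mem_of_mem_ucs hb)) ?_
    rw [lie_sub, sub_eq_zero]
    exact hab
  exact (LinearMap.injOn_iff_surjOn hmaps).1 hinjOn he

end Field

section Exp

open IsNilpotent

variable {K A : Type*} [Field K] [Ring A] [Algebra K A] [Module ℚ A] {u : LieSubalgebra K A}
  {x v : A}

theorem exp_mul_mul_exp_neg_sub_mem (hu : ∀ v ∈ u, IsNilpotent v) (hx : x ∈ u.normalizer)
    (hv : v ∈ u) : exp v * x * exp (-v) - x ∈ u := by
  obtain ⟨N, hN⟩ := LieAlgebra.ad_nilpotent_of_nilpotent (R := K) (hu v hv)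
  rw [exp_mul_mul_exp_neg_eq_sum (hu v hv) x (pow_eq_zero_of_le N.le_succ hN),
    Finset.sum_range_succ']
  simp only [Nat.factorial_zero, Nat.cast_one, inv_one, one_smul, pow_zero,
    Module.End.one_apply, add_sub_cancel_right]
  exact Submodule.sum_mem u.toSubmodule fun i _ =>
    u.toSubmodule.rat_smul_mem _ (ad_pow_succ_apply_mem hv hx i)

theorem exp_add_mul_mul_exp_neg_sub_mem_ucs {δ : A} {k : ℕ} (hu : ∀ v ∈ u, IsNilpotent v)
    (hx : x ∈ u.normalizer) (hv : v ∈ u) (hδ : δ ∈ u.ucs (k + 1)) :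
    exp (v + δ) * x * exp (-(v + δ)) - exp v * x * exp (-v) - ⁅δ, x⁆ ∈ u.ucs k := by
  have hvδ : v + δ ∈ u := u.add_mem hv (mem_of_mem_ucs hδ)
  obtain ⟨N₁, hN₁⟩ := LieAlgebra.ad_nilpotent_of_nilpotent (R := K) (hu v hv)
  obtain ⟨N₂, hN₂⟩ := LieAlgebra.ad_nilpotent_of_nilpotent (R := K) (hu _ hvδ)
  rw [exp_mul_mul_exp_neg_eq_sum (hu _ hvδ) x (N := N₁ + N₂ + 2)
      (pow_eq_zero_of_le (by omega) hN₂),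
    exp_mul_mul_exp_neg_eq_sum (hu v hv) x (N := N₁ + N₂ + 2) (pow_eq_zero_of_le (by omega) hN₁),
    ← Finset.sum_sub_distrib]
  simp_rw [← smul_sub, ← LinearMap.sub_apply]
  rw [Finset.sum_range_succ', Finset.sum_range_succ']
  have h₀ : (LieAlgebra.ad K A (v + δ) ^ 0 - LieAlgebra.ad K A v ^ 0) x = 0 := by simp
  have h₁ : (LieAlgebra.ad K A (v + δ) ^ (0 + 1) - LieAlgebra.ad K A v ^ (0 + 1)) x = ⁅δ, x⁆ := by
    simp
  simp only [h₀, h₁, smul_zero, add_zero, zero_add, Nat.factorial_one, Nat.cast_one, inv_one,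
    one_smul, add_sub_cancel_right]
  exact Submodule.sum_mem _ fun i _ =>
    Submodule.rat_smul_mem _ _ (ad_add_pow_sub_apply_mem_ucs hv hδ hx i)

theorem exists_exp_mul_mul_exp_neg_eq [FiniteDimensional K A] (hu : ∀ v ∈ u, IsNilpotent v)
    (hx : x ∈ u.normalizer) (hinj : ∀ w ∈ u, ⁅x, w⁆ = 0 → w = 0) {w : A} (hw : w ∈ u) :
    ∃ v ∈ u, exp v * x * exp (-v) = x + w := by
  have : LieRing.IsNilpotent u := LieAlgebra.isNilpotent_iff_forall (R := K).2 fun v =>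
    LieAlgebra.isNilpotent_ad_of_isNilpotent (hu v v.2)
  obtain ⟨n, hn⟩ := exists_ucs_eq_toSubmodule (u := u)
  suffices ∀ k, ∀ v ∈ u, exp v * x * exp (-v) - (x + w) ∈ u.ucs k →
      ∃ v ∈ u, exp v * x * exp (-v) = x + w from
    this n 0 u.zero_mem (by simpa [hn] using u.neg_mem hw)
  intro k
  induction k with
  | zero => exact fun v hv h => ⟨v, hv, by simpa [ucs, sub_eq_zero] using h⟩
  | succ k ih =>
    intro v hv he
    obtain ⟨δ, hδ, hxδ⟩ := exists_lie_eq_of_injOn hx hinj he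
    refine ih (v + δ) (u.add_mem hv (mem_of_mem_ucs hδ)) ?_
    convert exp_add_mul_mul_exp_neg_sub_mem_ucs hu hx hv hδ using 1
    rw [← lie_skew, hxδ]
    abel

end Exp

end LieSubalgebra

/-- Let `p = l ⊕ u` be a parabolic subalgebra of `gl(m,ℂ)` with Levi factor `l`
and nilradical `u`, `z` a generic central element of `l` (central in `l` with
centralizer exactly `l`), and `y ∈ l` nilpotent.  Then the orbit of `z + y`
under `U = exp(u)` is the affine subspace `z + y + u`. -/
theorem stmt11 (m : ℕ) (l u : LieSubalgebra ℂ (Matrix (Fin m) (Fin m) ℂ))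
    (hlu : ∀ a ∈ l, ∀ v ∈ u, ⁅a, v⁆ ∈ u)
    (hun : ∀ v ∈ u, IsNilpotent v)
    (hlcapu : ∀ w : Matrix (Fin m) (Fin m) ℂ, w ∈ l → w ∈ u → w = 0)
    (z : Matrix (Fin m) (Fin m) ℂ)
    (hzc : ∀ a ∈ l, ⁅z, a⁆ = 0)
    (hzgen : ∀ w : Matrix (Fin m) (Fin m) ℂ, ⁅z, w⁆ = 0 → w ∈ l)
    (y : Matrix (Fin m) (Fin m) ℂ) (hy : y ∈ l) (hyn : IsNilpotent y) :
    {x : Matrix (Fin m) (Fin m) ℂ | ∃ v ∈ u, x = nilExp m v * (z + y) * nilExp m (-v)} =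
    {x : Matrix (Fin m) (Fin m) ℂ | ∃ w ∈ u, x = z + y + w} := by
  have hzl : z ∈ l := hzgen z (lie_self z)
  have hx : z + y ∈ u.normalizer :=
    (u.mem_normalizer_iff _).2 fun v hv => hlu _ (l.add_mem hzl hy) v hv
  have hzy : Commute z y := sub_eq_zero.1 (by rw [← Ring.lie_def]; exact hzc y hy)
  have hinj : ∀ w ∈ u, ⁅z + y, w⁆ = 0 → w = 0 := fun w hw h =>
    Module.End.eq_zero_of_add_apply_eq_zero (p := u.toSubmodule)
      (LieAlgebra.commute_ad_of_commute (R := ℂ) hzy) (LieAlgebra.ad_nilpotent_of_nilpotent hyn)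
      (fun w hw => hlu z hzl w hw) (fun w hw hzw => hlcapu w (hzgen w hzw) hw) hw
      (by rwa [← map_add])
  ext X
  constructor
  · rintro ⟨v, hv, rfl⟩
    refine ⟨_, LieSubalgebra.exp_mul_mul_exp_neg_sub_mem hun hx hv, ?_⟩
    rw [nilExp_eq_exp (hun v hv), nilExp_eq_exp (hun v hv).neg, add_sub_cancel]
  · rintro ⟨w, hw, rfl⟩
    obtain ⟨v, hv, hvw⟩ := LieSubalgebra.exists_exp_mul_mul_exp_neg_eq hun hx hinj hw
    exact ⟨v, hv, by rw [nilExp_eq_exp (hun v hv), nilExp_eq_exp (hun v hv).neg, hvw]⟩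
end
end
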